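/- Let k ≥ 1, let J be a finite index set, let Q̂ and W_j (j ∈ J) be real symmetric (k+1)×(k+1) matrices, and let W⁰ be the (k+1)×(k+1) matrix whose only nonzero entry is a 1 in position (k+1, k+1). Let Ŷ* be a symmetric positive semidefinite (k+1)×(k+1) matrix with ⟨W_j, Ŷ*⟩ ≤ 0 for all j ∈ J and ⟨W⁰, Ŷ*⟩ = 1 (exact primal feasibility). Let ε > 0, let λ : J → ℝ with λ_j ≤ 0 for all j, and let ν ∈ ℝ satisfy Q̂ + Σ_{j∈J} λ_j W_j − ν W⁰ ⪯ ε·I (ε-approximate dual feasibility, I the identity). Then ⟨Q̂, Ŷ*⟩ ≤ ε · trace(Ŷ*) + ν. (This is the second inequality of the proposition on valid bounds from inexact SDP solutions: combined with trace(Ŷ*) ≤ 1 + t_*² it yields Φ̄(𝓕) ≤ ε(t_*² + 1) + ν, a valid upper bound on the DNN bound computable from any approximate dual solution.) -/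

import Mathlib

/-! The dual slack `εI - (Q̂ + ∑ λⱼ Wⱼ - ν W⁰)` and `Ŷ*` are both positive semidefinite, so their
Frobenius product is nonnegative. Expanding it linearly, each `λⱼ ⟨Wⱼ, Ŷ*⟩` is a product of two
nonpositive numbers and `⟨W⁰, Ŷ*⟩ = 1`, which leaves `ε trace Ŷ* - ⟨Q̂, Ŷ*⟩ + ν ≥ 0`. -/

open Matrix

noncomputable section

/-- Frobenius (trace) inner product of real matrices. -/
def frob {ι : Type} [Fintype ι] (A B : Matrix ι ι ℝ) : ℝ := (Aᵀ * B).trace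

open scoped ComplexOrder MatrixOrder in
/-- Conjugating by `√A` turns `A * B` into the positive semidefinite `√A * B * √A`, which has the
same trace. -/
theorem Matrix.PosSemidef.trace_mul_nonneg {n 𝕜 : Type*} [Fintype n] [DecidableEq n] [RCLike 𝕜]
    {A B : Matrix n n 𝕜} (hA : A.PosSemidef) (hB : B.PosSemidef) : 0 ≤ (A * B).trace := by
  have hsqrt : (CFC.sqrt A)ᴴ = CFC.sqrt A := (CFC.sqrt_nonneg A).posSemidef.1
  have hconj : (CFC.sqrt A * B * CFC.sqrt A).PosSemidef := by
    simpa only [hsqrt] using hB.conjTranspose_mul_mul_same (CFC.sqrt A)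
  calc 0 ≤ (CFC.sqrt A * B * CFC.sqrt A).trace := hconj.trace_nonneg
    _ = (CFC.sqrt A * CFC.sqrt A * B).trace := trace_mul_cycle _ _ _
    _ = (A * B).trace := by rw [CFC.sqrt_mul_sqrt_self A hA.nonneg]

section frob

variable {ι : Type} [Fintype ι]

theorem frob_nonneg {A B : Matrix ι ι ℝ} (hA : A.PosSemidef) (hB : B.PosSemidef) :
    0 ≤ frob A B := by
  classical
  rw [frob, ← conjTranspose_eq_transpose_of_trivial, hA.1]
  exact hA.trace_mul_nonneg hB

theorem frob_one_left [DecidableEq ι] (B : Matrix ι ι ℝ) : frob 1 B = B.trace := by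
  simp [frob]

theorem frob_add_left (A A' B : Matrix ι ι ℝ) : frob (A + A') B = frob A B + frob A' B := by
  simp [frob, add_mul]

theorem frob_sub_left (A A' B : Matrix ι ι ℝ) : frob (A - A') B = frob A B - frob A' B := by
  simp [frob, sub_mul]

theorem frob_smul_left (c : ℝ) (A B : Matrix ι ι ℝ) : frob (c • A) B = c * frob A B := by
  simp [frob]

theorem frob_sum_left {J : Type*} (s : Finset J) (A : J → Matrix ι ι ℝ) (B : Matrix ι ι ℝ) :
    frob (∑ j ∈ s, A j) B = ∑ j ∈ s, frob (A j) B := by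
  simp [frob, transpose_sum, Matrix.sum_mul, trace_sum]

end frob

theorem valid_bound_from_inexact_dual_general (k : ℕ)
    (J : Type) [Fintype J]
    (Qh : Matrix (Fin (k + 1)) (Fin (k + 1)) ℝ)
    (W : J → Matrix (Fin (k + 1)) (Fin (k + 1)) ℝ)
    (Yh : Matrix (Fin (k + 1)) (Fin (k + 1)) ℝ) (hYpsd : Yh.PosSemidef)
    (hWY : ∀ j, frob (W j) Yh ≤ 0)
    (hYcorner : frob (Matrix.single (Fin.last k) (Fin.last k) (1 : ℝ)) Yh = 1)
    (ε : ℝ)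
    (lam : J → ℝ) (hlam : ∀ j, lam j ≤ 0) (ν : ℝ)
    (hdual : (ε • (1 : Matrix (Fin (k + 1)) (Fin (k + 1)) ℝ)
        - (Qh + ∑ j, lam j • W j
          - ν • Matrix.single (Fin.last k) (Fin.last k) (1 : ℝ))).PosSemidef) :
    frob Qh Yh ≤ ε * Yh.trace + ν := by
  have hgap := frob_nonneg hdual hYpsd
  simp only [frob_sub_left, frob_add_left, frob_smul_left, frob_sum_left, frob_one_left,
    hYcorner] at hgap
  have hmult : 0 ≤ ∑ j, lam j * frob (W j) Yh :=
    Finset.sum_nonneg fun j _ => mul_nonneg_of_nonpos_of_nonpos (hlam j) (hWY j)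
  linarith

/-- second inequality for valid bounds from inexact SDP solutions: an exactly
primal feasible `Ŷ*` and an `ε`-approximately dual feasible `(λ, ν)` satisfy
`⟨Q̂, Ŷ*⟩ ≤ ε·trace(Ŷ*) + ν`. -/
theorem valid_bound_from_inexact_dual (k : ℕ) (hk : 1 ≤ k)
    (J : Type) [Fintype J]
    (Qh : Matrix (Fin (k + 1)) (Fin (k + 1)) ℝ) (hQh : Qh.IsSymm)
    (W : J → Matrix (Fin (k + 1)) (Fin (k + 1)) ℝ) (hW : ∀ j, (W j).IsSymm)
    (Yh : Matrix (Fin (k + 1)) (Fin (k + 1)) ℝ) (hYpsd : Yh.PosSemidef)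
    (hWY : ∀ j, frob (W j) Yh ≤ 0)
    (hYcorner : frob (Matrix.single (Fin.last k) (Fin.last k) (1 : ℝ)) Yh = 1)
    (ε : ℝ) (hε : 0 < ε)
    (lam : J → ℝ) (hlam : ∀ j, lam j ≤ 0) (ν : ℝ)
    (hdual : (ε • (1 : Matrix (Fin (k + 1)) (Fin (k + 1)) ℝ)
        - (Qh + ∑ j, lam j • W j
          - ν • Matrix.single (Fin.last k) (Fin.last k) (1 : ℝ))).PosSemidef) :
    frob Qh Yh ≤ ε * Yh.trace + ν :=
  valid_bound_from_inexact_dual_general k J Qh W Yh hYpsd hWY hYcorner ε lam hlam ν hdual
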